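/- Let (X,r) be a square-free solution of arbitrary cardinality which is a multipermutation solution of level m ≥ 1. Then the structure group G(X,r) is solvable of solvable length at most m, and the permutation group G(X,r) ⊆ Sym(X) is solvable of solvable length at most m − 1. -/

import Mathlib

namespace YBPaper

variable {X : Type*}

/-- Left translation: `lact r x y = ˣy`. -/
def lact (r : X × X → X × X) (x y : X) : X := (r (x, y)).1

/-- Right translation: `ract r x y = xʸ`. -/
def ract (r : X × X → X × X) (x y : X) : X := (r (x, y)).2

def r12 (r : X × X → X × X) : X × X × X → X × X × X :=
  fun p => ((r (p.1, p.2.1)).1, (r (p.1, p.2.1)).2, p.2.2)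

def r23 (r : X × X → X × X) : X × X × X → X × X × X :=
  fun p => (p.1, r (p.2.1, p.2.2))

/-- A non-degenerate involutive square-free set-theoretic solution of the YBE. -/
structure IsSquareFreeSolution (r : X × X → X × X) : Prop where
  nondegL : ∀ x : X, Function.Bijective fun y => (r (x, y)).1
  nondegR : ∀ y : X, Function.Bijective fun x => (r (x, y)).2
  invol : ∀ p : X × X, r (r p) = p
  sqfree : ∀ x : X, r (x, x) = (x, x)
  braided : ∀ p : X × X × X, r12 r (r23 r (r12 r p)) = r23 r (r12 r (r23 r p))

/-- `relk l k x y` means the images of `x` and `y` in the `k`-th retract coincide. -/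
def relk (l : X → X → X) : ℕ → X → X → Prop
  | 0 => fun x y => x = y
  | (k+1) => fun x y => ∀ z : X, relk l k (l x z) (l y z)

/-- `mplLe l m` : the `m`-th retract is a one-element solution, i.e. `mpl ≤ m`. -/
def mplLe (l : X → X → X) (m : ℕ) : Prop := ∀ x y : X, relk l m x y

/-- `mplEq l m` : the multipermutation level is exactly `m`. -/
def mplEq (l : X → X → X) (m : ℕ) : Prop := mplLe l m ∧ ∀ k < m, ¬ mplLe l k

/-- The set of left translations, as permutations. -/
def lperms (r : X × X → X × X) : Set (Equiv.Perm X) :=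
  {σ : Equiv.Perm X | ∃ x : X, ∀ y : X, σ y = (r (x, y)).1}

/-- The YB permutation group `𝒢(X,r)`, generated by the left translations. -/
def Gcal (r : X × X → X × X) : Subgroup (Equiv.Perm X) := Subgroup.closure (lperms r)


/-- Relations of the structure group `G(X,r) = ⟨X ∣ xy = (ˣy)(xʸ)⟩`. -/
def structRels (r : X × X → X × X) : Set (FreeGroup X) :=
  {w | ∃ x y : X, w = FreeGroup.of x * FreeGroup.of y *
        (FreeGroup.of ((r (x, y)).1) * FreeGroup.of ((r (x, y)).2))⁻¹}

/-!
The assignment `x ↦ (e_x, λ_x)` extends to a homomorphism `G(X,r) → ℤ^(X) ⋊ Sym(X)`, with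
components `L` and a cocycle `π`. The cocycle is injective: the maps `g ↦ g · L(g)⁻¹(y)`, which
add `e_y` to `π`, commute with each other by the defining relations and square-freeness, so they
integrate to an inverse of `π`.

Write `~ₖ` for the kernel of `X → Retᵏ(X,r)`; every `λ_x` permutes the `~ₖ`-classes. Let `Mₖ`
consist of the elements `g` such that `L(g)` fixes every `~ₖ`-class. On `Mₖ₊₁` the push-forward of
`π` to `ℤ^(X/~ₖ₊₁)` is additive, so it vanishes on commutators of `Mₖ₊₁`. A vector with vanishing
push-forward is reached from `0` by moving units between `~ₖ₊₁`-equivalent points, and each move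
changes `L ∘ π⁻¹` only inside `~ₖ`-classes; hence `⁅Mₖ₊₁, Mₖ₊₁⁆ ≤ Mₖ`. As `Retᵐ` is a point,
`Mₘ₋₁` is everything, and `M₀ = ker L` is abelian since `π` is injective and additive on it. So
`G^(m) = 1`, and the `(m-1)`-st derived subgroup of the permutation group is the image of
`G^(m-1) ≤ ker L`.
-/
section Retract

variable (l : X → X → X)

theorem relk_refl : ∀ (k : ℕ) (x : X), relk l k x x
  | 0, _ => rfl
  | k + 1, _ => fun _ => relk_refl k _

variable {l}

theorem relk_symm : ∀ {k : ℕ} {x y : X}, relk l k x y → relk l k y x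
  | 0, _, _, hxy => Eq.symm hxy
  | _ + 1, _, _, hxy => fun z => relk_symm (hxy z)

theorem relk_trans : ∀ {k : ℕ} {x y z : X}, relk l k x y → relk l k y z → relk l k x z
  | 0, _, _, _, hxy, hyz => Eq.trans hxy hyz
  | _ + 1, _, _, _, hxy, hyz => fun w => relk_trans (hxy w) (hyz w)

theorem relk_succ_of_relk : ∀ {k : ℕ} {x y : X}, relk l k x y → relk l (k + 1) x y
  | 0, _, _, hxy => fun z => by rw [hxy]; exact relk_refl l 0 _
  | _ + 1, _, _, hxy => fun z => relk_succ_of_relk (hxy z)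

variable (l)

def retractSetoid (k : ℕ) : Setoid X :=
  ⟨relk l k, ⟨relk_refl l k, relk_symm, relk_trans⟩⟩

def retractStab (k : ℕ) : Subgroup (Equiv.Perm X) where
  carrier := {σ | ∀ z z', relk l k (σ z) (σ z') ↔ relk l k z z'}
  one_mem' _ _ := Iff.rfl
  mul_mem' hσ hτ z z' := (hσ _ _).trans (hτ z z')
  inv_mem' {σ} hσ z z' := by simpa using (hσ (σ⁻¹ z) (σ⁻¹ z')).symm

def retractKer (k : ℕ) : Subgroup (Equiv.Perm X) where
  carrier := {σ | ∀ z, relk l k (σ z) z}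
  one_mem' z := relk_refl _ k z
  mul_mem' hσ hτ z := relk_trans (hσ _) (hτ z)
  inv_mem' {σ} hσ z := relk_symm (by simpa using hσ (σ⁻¹ z))

theorem retractKer_zero : retractKer l 0 = ⊥ :=
  eq_bot_iff.2 fun _ hσ => Equiv.ext hσ

variable {l}

theorem conj_mem_retractKer {k : ℕ} {σ τ : Equiv.Perm X}
    (hσ : σ ∈ retractStab l k) (hτ : τ ∈ retractKer l k) : σ * τ * σ⁻¹ ∈ retractKer l k := by
  intro z
  simpa using (hσ (τ (σ⁻¹ z)) (σ⁻¹ z)).2 (hτ _)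

end Retract

theorem derivedSeries_le_of_commutator_le {G : Type*} [Group G] {M : ℕ → Subgroup G}
    (hM : ∀ k, ⁅M (k + 1), M (k + 1)⁆ ≤ M k) : ∀ i k, M (k + i) = ⊤ → derivedSeries G i ≤ M k
  | 0, k, htop => by rw [show M k = ⊤ from htop]; exact le_top
  | i + 1, k, htop => by
    have hi := derivedSeries_le_of_commutator_le hM i (k + 1) (by rw [← htop]; congr 1; omega)
    rw [derivedSeries_succ]
    exact (Subgroup.commutator_mono hi hi).trans (hM k)

abbrev StructGroup (r : X × X → X × X) : Type _ := PresentedGroup (structRels r)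

noncomputable def permAct : Equiv.Perm X →* MulAut (Multiplicative (X →₀ ℤ)) :=
  MonoidHom.mk' (fun σ => AddEquiv.toMultiplicative (Finsupp.domCongr σ)) fun σ τ => by
    ext v : 1
    exact Finsupp.equivMapDomain_trans (τ : X ≃ X) σ v.toAdd

@[simp]
theorem toAdd_permAct (σ : Equiv.Perm X) (v : Multiplicative (X →₀ ℤ)) :
    (permAct σ v).toAdd = v.toAdd.mapDomain σ :=
  Finsupp.equivMapDomain_eq_mapDomain _ _

namespace IsSquareFreeSolution

variable {r : X × X → X × X} (h : IsSquareFreeSolution r)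

noncomputable def lperm (x : X) : Equiv.Perm X := Equiv.ofBijective (lact r x) (h.nondegL x)

@[simp]
theorem lperm_apply (x y : X) : h.lperm x y = lact r x y := rfl

theorem lperm_mem_Gcal (x : X) : h.lperm x ∈ Gcal r :=
  Subgroup.subset_closure ⟨x, fun _ => rfl⟩

theorem lact_lact_ract (h : IsSquareFreeSolution r) (x y : X) :
    lact r (lact r x y) (ract r x y) = x :=
  congrArg Prod.fst (h.invol (x, y))

theorem lact_self (h : IsSquareFreeSolution r) (x : X) : lact r x x = x :=
  congrArg Prod.fst (h.sqfree x)

theorem lperm_symm_self (x : X) : (h.lperm x).symm x = x := by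
  rw [Equiv.symm_apply_eq, lperm_apply, h.lact_self]

theorem lperm_lact_mul_lperm_ract (x y : X) :
    h.lperm (lact r x y) * h.lperm (ract r x y) = h.lperm x * h.lperm y :=
  Equiv.ext fun z => by
    simpa [r12, r23, lact, ract] using congrArg (·.1) (h.braided (x, y, z))

theorem ract_eq_lperm_lact_inv (x y : X) : ract r x y = (h.lperm (lact r x y))⁻¹ x := by
  rw [Equiv.Perm.eq_inv_iff_eq, lperm_apply, h.lact_lact_ract]

theorem ract_eq_lperm_inv (x y : X) : ract r x y = (h.lperm y)⁻¹ ((h.lperm x)⁻¹ x) := by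
  have key := congrArg (· (ract r x y)) (h.lperm_lact_mul_lperm_ract x y)
  simp only [Equiv.Perm.mul_apply, lperm_apply, h.lact_self, h.lact_lact_ract] at key
  rw [Equiv.Perm.eq_inv_iff_eq, Equiv.Perm.eq_inv_iff_eq, lperm_apply, lperm_apply]
  exact key.symm

theorem relk_succ_iff {k : ℕ} {z z' : X} :
    relk (lact r) (k + 1) z z' ↔ ∀ w, relk (lact r) k (h.lperm z w) (h.lperm z' w) :=
  Iff.rfl

theorem lperm_lact_eq (x z : X) :
    h.lperm (lact r x z) = h.lperm x * h.lperm z * (h.lperm (ract r x z))⁻¹ :=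
  eq_mul_inv_of_mul_eq (h.lperm_lact_mul_lperm_ract x z)

theorem lperm_eq_inv_mul_mul (x z : X) :
    h.lperm z = (h.lperm x)⁻¹ * h.lperm (lact r x z) * h.lperm (ract r x z) := by
  rw [mul_assoc, h.lperm_lact_mul_lperm_ract, inv_mul_cancel_left]

section Congruence

variable {k : ℕ} (hk : Gcal r ≤ retractStab (lact r) k)
include hk

theorem relk_lperm_inv_apply {z z' : X} (hz : relk (lact r) (k + 1) z z') (t : X) :
    relk (lact r) k ((h.lperm z)⁻¹ t) ((h.lperm z')⁻¹ t) := by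
  rw [← hk (h.lperm_mem_Gcal z')]
  simpa using relk_symm ((h.relk_succ_iff.1 hz) ((h.lperm z)⁻¹ t))

theorem relk_apply_lperm_apply {σ τ τ' : Equiv.Perm X} (hσ : σ ∈ Gcal r) {b b' : X}
    (hb : relk (lact r) (k + 1) b b') (hτ : ∀ w, relk (lact r) k (τ w) (τ' w)) (w : X) :
    relk (lact r) k (σ (h.lperm b (τ w))) (σ (h.lperm b' (τ' w))) := by
  rw [hk hσ]
  exact relk_trans ((hk (h.lperm_mem_Gcal b) _ _).2 (hτ w)) (hb _)

theorem lperm_mem_retractStab_succ (x : X) : h.lperm x ∈ retractStab (lact r) (k + 1) := by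
  intro z z'
  change relk (lact r) (k + 1) (lact r x z) (lact r x z') ↔ relk (lact r) (k + 1) z z'
  constructor
  · intro hu
    rw [h.relk_succ_iff, h.lperm_eq_inv_mul_mul x z, h.lperm_eq_inv_mul_mul x z']
    intro w
    refine h.relk_apply_lperm_apply hk (inv_mem (h.lperm_mem_Gcal x)) hu (fun w => ?_) w
    refine (h.relk_succ_iff).1 (relk_succ_of_relk ?_) w
    rw [h.ract_eq_lperm_lact_inv, h.ract_eq_lperm_lact_inv]
    exact h.relk_lperm_inv_apply hk hu x
  · intro hz
    rw [h.relk_succ_iff, h.lperm_lact_eq x z, h.lperm_lact_eq x z']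
    intro w
    refine h.relk_apply_lperm_apply hk (h.lperm_mem_Gcal x) hz (fun w => ?_) w
    refine h.relk_lperm_inv_apply hk (relk_succ_of_relk ?_) w
    rw [h.ract_eq_lperm_inv, h.ract_eq_lperm_inv]
    exact h.relk_lperm_inv_apply hk hz _

end Congruence

theorem Gcal_le_retractStab (h : IsSquareFreeSolution r) : ∀ k, Gcal r ≤ retractStab (lact r) k
  | 0 => fun σ _ _ _ => σ.injective.eq_iff
  | k + 1 => (Subgroup.closure_le _).2 fun σ ⟨x, hx⟩ => by
      rw [show σ = h.lperm x from Equiv.ext hx]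
      exact h.lperm_mem_retractStab_succ (h.Gcal_le_retractStab k) x

/-- `x ↦ (e_x, λ_x)` respects the defining relations because `λ_{ˣy}(xʸ) = x`. -/
noncomputable def affineRep :
    StructGroup r →* Multiplicative (X →₀ ℤ) ⋊[permAct] Equiv.Perm X :=
  PresentedGroup.toGroup (f := fun x => ⟨Multiplicative.ofAdd (Finsupp.single x 1), h.lperm x⟩) (by
    rintro _ ⟨x, y, rfl⟩
    change FreeGroup.lift _ (.of x * .of y * (.of (lact r x y) * .of (ract r x y))⁻¹)
      = (1 : Multiplicative (X →₀ ℤ) ⋊[permAct] Equiv.Perm X)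
    simp only [map_mul, map_inv, FreeGroup.lift_apply_of, mul_inv_eq_one]
    apply SemidirectProduct.ext
    · apply Multiplicative.toAdd.injective
      simp [h.lact_lact_ract, add_comm]
    · exact (h.lperm_lact_mul_lperm_ract x y).symm)

noncomputable def perm : StructGroup r →* Equiv.Perm X :=
  SemidirectProduct.rightHom.comp h.affineRep

noncomputable def cocycle (g : StructGroup r) : X →₀ ℤ :=
  (h.affineRep g).left.toAdd

@[simp]
theorem perm_of (x : X) : h.perm (PresentedGroup.of x) = h.lperm x := by
  simp [perm, affineRep]

@[simp]
theorem cocycle_of (x : X) : h.cocycle (PresentedGroup.of x) = Finsupp.single x 1 := by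
  simp [cocycle, affineRep]

theorem cocycle_mul (g g' : StructGroup r) :
    h.cocycle (g * g') = h.cocycle g + (h.cocycle g').mapDomain (h.perm g) := by
  simp [cocycle, perm]

@[simp]
theorem cocycle_one : h.cocycle 1 = 0 := by
  simp [cocycle]

theorem range_perm : h.perm.range = Gcal r := by
  rw [MonoidHom.range_eq_map, ← PresentedGroup.closure_range_of, MonoidHom.map_closure,
    ← Set.range_comp, Gcal]
  congr 1
  ext σ
  simp [lperms, lact, Equiv.ext_iff, eq_comm]

theorem of_mul_of (a b : X) : (PresentedGroup.of a : StructGroup r) * .of b =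
    .of (lact r a b) * .of (ract r a b) :=
  PresentedGroup.mk_eq_mk_of_mul_inv_mem ⟨a, b, rfl⟩

theorem of_mul_of_lperm_inv (c d : X) : (PresentedGroup.of c : StructGroup r) *
    .of ((h.lperm c)⁻¹ d) = .of d * .of ((h.lperm d)⁻¹ c) := by
  rw [of_mul_of, h.ract_eq_lperm_lact_inv, ← h.lperm_apply]
  simp

/-- Right multiplication by the generator that adds `e_y` to the cocycle. -/
noncomputable def step (y : X) : Equiv.Perm (StructGroup r) where
  toFun g := g * .of ((h.perm g)⁻¹ y)
  invFun g := g * (.of ((h.perm g)⁻¹ y))⁻¹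
  left_inv g := by simp [h.lperm_symm_self]
  right_inv g := by simp [h.lact_self]

theorem step_apply_perm (g : StructGroup r) (x : X) : h.step (h.perm g x) g = g * .of x := by
  simp [step]

theorem step_commute (y z : X) : Commute (h.step y) (h.step z) := by
  ext g : 1
  simp only [Equiv.Perm.mul_apply, step, Equiv.coe_fn_mk, map_mul, perm_of, mul_inv_rev,
    Equiv.Perm.mul_apply, mul_assoc, h.of_mul_of_lperm_inv]

section NormalForm

open scoped IsMulCommutative

noncomputable def stepGroup : Subgroup (Equiv.Perm (StructGroup r)) :=
  Subgroup.closure (Set.range h.step)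

instance : IsMulCommutative h.stepGroup :=
  Subgroup.isMulCommutative_closure (by
    rintro _ ⟨y, rfl⟩ _ ⟨z, rfl⟩
    exact h.step_commute y z)

noncomputable def stepHom : (X →₀ ℤ) →+ Additive h.stepGroup :=
  Finsupp.liftAddHom fun y =>
    zmultiplesHom _ (.ofMul ⟨h.step y, Subgroup.subset_closure ⟨y, rfl⟩⟩)

noncomputable def normalForm (v : X →₀ ℤ) : StructGroup r :=
  ((h.stepHom v).toMul : Equiv.Perm (StructGroup r)) 1

theorem normalForm_zero : h.normalForm 0 = 1 := by
  simp [normalForm]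

theorem normalForm_add_single (v : X →₀ ℤ) (y : X) :
    h.normalForm (v + Finsupp.single y 1) = h.step y (h.normalForm v) := by
  rw [normalForm, add_comm, map_add, toMul_add, Subgroup.coe_mul, Equiv.Perm.mul_apply, stepHom,
    Finsupp.liftAddHom_apply_single, zmultiplesHom_apply, one_zsmul]
  rfl

theorem perm_normalForm_add_single (v : X →₀ ℤ) (y : X) :
    h.perm (h.normalForm (v + Finsupp.single y 1)) =
      h.perm (h.normalForm v) * h.lperm ((h.perm (h.normalForm v))⁻¹ y) := by
  simp [h.normalForm_add_single, step]

theorem normalForm_cocycle (g : StructGroup r) : h.normalForm (h.cocycle g) = g := by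
  have hg : g ∈ Subgroup.closure (Set.range PresentedGroup.of) := by simp
  induction hg using Subgroup.closure_induction_right with
  | one => simpa using h.normalForm_zero
  | mul_right g _ _ hx ih =>
    obtain ⟨x, rfl⟩ := hx
    rw [h.cocycle_mul, h.cocycle_of, Finsupp.mapDomain_single, h.normalForm_add_single, ih,
      h.step_apply_perm]
  | mul_inv_cancel g _ _ hx ih =>
    obtain ⟨x, rfl⟩ := hx
    apply (h.step (h.perm (g * (PresentedGroup.of x : StructGroup r)⁻¹) x)).injective
    rw [← h.normalForm_add_single, h.step_apply_perm, inv_mul_cancel_right,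
      ← Finsupp.mapDomain_single, ← h.cocycle_of, ← h.cocycle_mul, inv_mul_cancel_right, ih]

end NormalForm

theorem cocycle_injective : Function.Injective h.cocycle :=
  Function.LeftInverse.injective h.normalForm_cocycle

theorem perm_mem_retractStab (k : ℕ) (g : StructGroup r) :
    h.perm g ∈ retractStab (lact r) k :=
  h.Gcal_le_retractStab k (h.range_perm ▸ ⟨g, rfl⟩)

theorem lperm_mul_inv_mem_retractKer {k : ℕ} {a b : X} (hab : relk (lact r) (k + 1) a b) :
    h.lperm a * (h.lperm b)⁻¹ ∈ retractKer (lact r) k := fun t => by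
  simpa using (h.relk_succ_iff.1 hab) ((h.lperm b)⁻¹ t)

def invariantShifts (k : ℕ) : AddSubgroup (X →₀ ℤ) where
  carrier := {d | ∀ u,
    h.perm (h.normalForm (u + d)) * (h.perm (h.normalForm u))⁻¹ ∈ retractKer (lact r) k}
  zero_mem' u := by simp [one_mem]
  add_mem' {d e} hd he u := by
    have := mul_mem (he (u + d)) (hd u)
    rwa [mul_assoc, inv_mul_cancel_left, add_assoc] at this
  neg_mem' {d} hd u := by
    have := inv_mem (hd (u + -d))
    rwa [neg_add_cancel_right, mul_inv_rev, inv_inv] at this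

theorem single_sub_single_mem_invariantShifts {k : ℕ} {a b : X}
    (hab : relk (lact r) (k + 1) a b) :
    Finsupp.single a 1 - Finsupp.single b 1 ∈ h.invariantShifts k := by
  intro u
  obtain ⟨w, rfl⟩ : ∃ w, u = w + Finsupp.single b 1 := ⟨u - Finsupp.single b 1, by abel⟩
  rw [add_add_sub_cancel, h.perm_normalForm_add_single, h.perm_normalForm_add_single]
  set σ := h.perm (h.normalForm w)
  have hconj : σ * h.lperm (σ⁻¹ a) * (σ * h.lperm (σ⁻¹ b))⁻¹ =
      σ * (h.lperm (σ⁻¹ a) * (h.lperm (σ⁻¹ b))⁻¹) * σ⁻¹ := by group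
  rw [hconj]
  refine conj_mem_retractKer (h.perm_mem_retractStab k _) (h.lperm_mul_inv_mem_retractKer ?_)
  exact ((inv_mem (h.perm_mem_retractStab (k + 1) _)) a b).2 hab

theorem sub_mapDomain_mem_invariantShifts {k : ℕ} {f : X → X}
    (hf : ∀ x, relk (lact r) (k + 1) x (f x)) (v : X →₀ ℤ) :
    v - v.mapDomain f ∈ h.invariantShifts k := by
  induction v using Finsupp.induction_linear with
  | zero => simp [zero_mem]
  | add v w hv hw =>
    rw [Finsupp.mapDomain_add, add_sub_add_comm]
    exact add_mem hv hw
  | single a n =>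
    rw [Finsupp.mapDomain_single, ← Finsupp.smul_single_one a n,
      ← Finsupp.smul_single_one (f a) n, ← smul_sub]
    exact zsmul_mem (h.single_sub_single_mem_invariantShifts (hf a)) n

theorem perm_normalForm_mem_retractKer {k : ℕ} {v : X →₀ ℤ}
    (hv : v.mapDomain (Quotient.mk (retractSetoid (lact r) (k + 1))) = 0) :
    h.perm (h.normalForm v) ∈ retractKer (lact r) k := by
  let s := retractSetoid (lact r) (k + 1)
  have hf : ∀ x, relk (lact r) (k + 1) x ((Quotient.out ∘ Quotient.mk s) x) :=
    fun x => relk_symm (Quotient.mk_out (s := s) x)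
  have hout : v.mapDomain (Quotient.out ∘ Quotient.mk s) = 0 := by
    rw [Finsupp.mapDomain_comp, hv, Finsupp.mapDomain_zero]
  have := h.sub_mapDomain_mem_invariantShifts hf v 0
  rwa [hout, sub_zero, zero_add, h.normalForm_zero, map_one, inv_one, mul_one] at this

theorem mapDomain_cocycle_mul {Q : Type*} {f : X → Q} {a : StructGroup r}
    (ha : f ∘ h.perm a = f) (b : StructGroup r) :
    (h.cocycle (a * b)).mapDomain f = (h.cocycle a).mapDomain f + (h.cocycle b).mapDomain f := by
  rw [h.cocycle_mul, Finsupp.mapDomain_add, ← Finsupp.mapDomain_comp, ha]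

open scoped commutatorElement in
theorem mapDomain_cocycle_commutatorElement {Q : Type*} {f : X → Q} {a b : StructGroup r}
    (ha : f ∘ h.perm a = f) (hb : f ∘ h.perm b = f) :
    (h.cocycle ⁅a, b⁆).mapDomain f = 0 := by
  have hinv : ∀ {c}, f ∘ h.perm c = f →
      (h.cocycle c⁻¹).mapDomain f = -(h.cocycle c).mapDomain f := fun {c} hc =>
    eq_neg_of_add_eq_zero_right (by simpa using (h.mapDomain_cocycle_mul hc c⁻¹).symm)
  have ha' : f ∘ h.perm a⁻¹ = f := by
    funext z
    simpa using (congrFun ha (h.perm a⁻¹ z)).symm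
  rw [commutatorElement_def, mul_assoc, mul_assoc, h.mapDomain_cocycle_mul ha,
    h.mapDomain_cocycle_mul hb, h.mapDomain_cocycle_mul ha', hinv ha, hinv hb]
  abel

noncomputable def levelSubgroup (k : ℕ) : Subgroup (StructGroup r) :=
  (retractKer (lact r) k).comap h.perm

theorem levelSubgroup_zero : h.levelSubgroup 0 = h.perm.ker := by
  rw [levelSubgroup, retractKer_zero, MonoidHom.comap_bot]

open scoped commutatorElement in
theorem commutator_levelSubgroup_succ_le (k : ℕ) :
    ⁅h.levelSubgroup (k + 1), h.levelSubgroup (k + 1)⁆ ≤ h.levelSubgroup k := by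
  have hstab : ∀ g ∈ h.levelSubgroup (k + 1),
      Quotient.mk (retractSetoid (lact r) (k + 1)) ∘ h.perm g = Quotient.mk _ :=
    fun g hg => funext fun z => Quotient.sound (hg z)
  rw [Subgroup.commutator_le]
  intro a ha b hb
  have := h.perm_normalForm_mem_retractKer
    (h.mapDomain_cocycle_commutatorElement (hstab a ha) (hstab b hb))
  rwa [h.normalForm_cocycle] at this

theorem commutator_ker_perm_eq_bot : ⁅h.perm.ker, h.perm.ker⁆ = ⊥ := by
  have hstab : ∀ g ∈ h.perm.ker, id ∘ h.perm g = id := fun g hg => by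
    rw [MonoidHom.mem_ker.1 hg]
    rfl
  rw [eq_bot_iff, Subgroup.commutator_le]
  intro a ha b hb
  apply h.cocycle_injective
  simpa using h.mapDomain_cocycle_commutatorElement (hstab a ha) (hstab b hb)

theorem levelSubgroup_eq_top {k : ℕ} (hmpl : mplLe (lact r) (k + 1)) :
    h.levelSubgroup k = ⊤ := by
  have hGcal : Gcal r ≤ retractKer (lact r) k :=
    (Subgroup.closure_le _).2 fun σ ⟨x, hx⟩ z => by
      rw [show σ = h.lperm x from Equiv.ext hx]
      simpa [h.lact_self] using hmpl x z z
  exact eq_top_iff.2 fun g _ => hGcal (h.range_perm ▸ ⟨g, rfl⟩)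

end IsSquareFreeSolution

/-- a multipermutation square-free solution of level `m ≥ 1` has
solvable structure group of solvable length `≤ m` and solvable permutation group
of solvable length `≤ m - 1`. -/
theorem stmt11 {X : Type*} (r : X × X → X × X) (h : IsSquareFreeSolution r)
    (m : ℕ) (hm : 1 ≤ m) (hmpl : mplEq (lact r) m) :
    derivedSeries (PresentedGroup (structRels r)) m = ⊥ ∧
    derivedSeries (↥(Gcal r)) (m - 1) = ⊥ := by
  obtain ⟨n, rfl⟩ : ∃ n, m = n + 1 := ⟨m - 1, by omega⟩
  have hker : derivedSeries (StructGroup r) n ≤ h.perm.ker := by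
    rw [← h.levelSubgroup_zero]
    exact derivedSeries_le_of_commutator_le h.commutator_levelSubgroup_succ_le n 0
      (by simpa using h.levelSubgroup_eq_top hmpl.1)
  constructor
  · rw [derivedSeries_succ, eq_bot_iff, ← h.commutator_ker_perm_eq_bot]
    exact Subgroup.commutator_mono hker hker
  · rw [Nat.add_sub_cancel, ← h.range_perm,
      ← map_derivedSeries_eq h.perm.rangeRestrict_surjective, Subgroup.map_eq_bot_iff,
      MonoidHom.ker_rangeRestrict]
    exact hker

end YBPaper
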